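/- Let (G_n)_{n∈ℕ} be a sequence of finite groups, each generated by a finite subset S_n with #S_n ≤ L for a fixed L ∈ ℕ, and equip each G_n with its word metric d_n. Let X = ⊔_{n∈ℕ} G_n be a coarse disjoint union, i.e. X carries a metric d that restricts to d_n on each G_n and satisfies d(G_n, G_m) ≥ n + m + diam(G_n) + diam(G_m) for all n ≠ m. Then the following are equivalent: (1) the sequence {(G_n, S_n)}_{n∈ℕ} is uniformly amenable: for every ε > 0 there exist D ∈ ℕ and functions f_n : G_n → [0,∞) with Σ_{γ∈G_n} f_n(γ)² = 1, Σ_{γ∈G_n} (f_n(γ) − f_n(γs))² ≤ ε² for every s ∈ S_n, and supp(f_n) ⊆ B(1_{G_n}, D); (2) X has Property A: for every ε > 0 and R > 0 there exist S > 0 and a map ξ assigning to each x ∈ X a function ξ_x : X → [0,∞) with Σ_{z∈X} ξ_x(z)² = 1, such that Σ_{z∈X} (ξ_x(z) − ξ_y(z))² ≤ ε² whenever d(x,y) ≤ R, and supp(ξ_x) ⊆ {z ∈ X : d(x,z) ≤ S} for every x ∈ X. -/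

import Mathlib

/-!
(1) ⇒ (2): a point `⟨n, a⟩` carries the translate `c ↦ f n (c⁻¹ * a)` of the Reiter function.
Since the `ℓ²` norm is right-invariant, `g ↦ ‖f - g·f‖₂` is subadditive, so moving the base
point by a word of length at most `R` moves the vector by at most `R ε`. Separation keeps
`R`-close points of the far blocks in a common block, and the finitely many near blocks are sent
to a single Dirac mass.

(2) ⇒ (1): on a block `G n` so far out that no `ξ x` can leave it, average the squares of the
`ξ h` moved back to the identity, `f n γ ^ 2 = |G n|⁻¹ ∑ h, ξ h (h γ⁻¹) ^ 2`. Almost invariance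
of `h ↦ ξ h` passes to `f n` through Cauchy–Schwarz, `∑ |u² - v²| ≤ ‖u - v‖ ‖u + v‖`, and
`(√a - √b)² ≤ |a - b|`. On the finitely many remaining blocks the constant function works, with
`D` the largest of their diameters.
-/

/-- The word-metric ball `B(1_G, D)` with respect to a generating set `S`:
the set of elements of `G` expressible as a product of at most `D` elements
of `S ∪ S⁻¹`. -/
def wordBall {G : Type*} [Group G] (S : Set G) (D : ℕ) : Set G :=
  {g | ∃ l : List G, l.length ≤ D ∧ (∀ x ∈ l, x ∈ S ∨ x⁻¹ ∈ S) ∧ l.prod = g}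

/-- The word metric associated to a generating set `S`: the distance from `x`
to `y` is the least `D` with `x⁻¹ * y ∈ B(1, D)`. -/
noncomputable def wordDist {G : Type*} [Group G] (S : Set G) (x y : G) : ℕ :=
  sInf {D : ℕ | x⁻¹ * y ∈ wordBall S D}

/-- The diameter of a finite group in the word metric associated to `S`. -/
noncomputable def wordDiam (G : Type*) [Group G] [Fintype G] (S : Set G) : ℕ :=
  Finset.univ.sup fun p : G × G => wordDist S p.1 p.2

open Finset Function

section WordMetric

variable {G : Type*} [Group G] {S : Set G}

lemma wordBall_mono {D D' : ℕ} (h : D ≤ D') : wordBall S D ⊆ wordBall S D' :=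
  fun _ ⟨l, hl, hS, hprod⟩ => ⟨l, hl.trans h, hS, hprod⟩

lemma inv_mem_wordBall {g : G} {D : ℕ} (h : g ∈ wordBall S D) : g⁻¹ ∈ wordBall S D := by
  obtain ⟨l, hl, hS, rfl⟩ := h
  refine ⟨(l.map (·⁻¹)).reverse, by simpa using hl, ?_, (List.prod_inv_reverse l).symm⟩
  simp only [List.mem_reverse, List.mem_map, forall_exists_index, and_imp, forall_apply_eq_imp_iff₂,
    inv_inv]
  exact fun x hx => (hS x hx).symm

lemma mem_wordBall_one {s : G} (hs : s ∈ S) : s ∈ wordBall S 1 :=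
  ⟨[s], by simp, by simp [hs], by simp⟩

lemma wordDist_le_of_mem_wordBall {x y : G} {D : ℕ} (h : x⁻¹ * y ∈ wordBall S D) :
    wordDist S x y ≤ D :=
  Nat.sInf_le h

lemma mem_wordBall_of_wordDist_le (hS : Subgroup.closure S = ⊤) {x y : G} {D : ℕ}
    (h : wordDist S x y ≤ D) : x⁻¹ * y ∈ wordBall S D := by
  have hmem : x⁻¹ * y ∈ Submonoid.closure (S ∪ S⁻¹) := by
    rw [← Subgroup.closure_toSubmonoid, Subgroup.mem_toSubmonoid, hS]
    exact Subgroup.mem_top _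
  obtain ⟨l, hl, hprod⟩ := Submonoid.exists_list_of_mem_closure hmem
  have hdist : wordDist S x y ∈ {D | x⁻¹ * y ∈ wordBall S D} :=
    Nat.sInf_mem ⟨l.length, l, le_rfl, hl, hprod⟩
  exact wordBall_mono h hdist

lemma mem_wordBall_wordDiam [Fintype G] (hS : Subgroup.closure S = ⊤) (g : G) :
    g ∈ wordBall S (wordDiam G S) := by
  have hdiam : wordDist S 1 g ≤ wordDiam G S :=
    le_sup (f := fun p : G × G => wordDist S p.1 p.2) (mem_univ (1, g))
  simpa using mem_wordBall_of_wordDist_le hS hdiam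

end WordMetric

section RightTranslation

variable {G : Type*} [Group G] [Fintype G]

noncomputable def rightTranslate (f : G → ℝ) (γ : G) : EuclideanSpace ℝ G :=
  WithLp.toLp 2 fun h => f (h * γ)

lemma norm_rightTranslate_sub_sq (f : G → ℝ) (γ γ' : G) :
    ‖rightTranslate f γ - rightTranslate f γ'‖ ^ 2 = ∑ h, (f (h * γ) - f (h * γ')) ^ 2 :=
  EuclideanSpace.real_norm_sq_eq _

lemma norm_rightTranslate_mul_sub (f : G → ℝ) (g γ γ' : G) :
    ‖rightTranslate f (g * γ) - rightTranslate f (g * γ')‖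
      = ‖rightTranslate f γ - rightTranslate f γ'‖ := by
  rw [← sq_eq_sq₀ (norm_nonneg _) (norm_nonneg _), norm_rightTranslate_sub_sq,
    norm_rightTranslate_sub_sq]
  simp only [← mul_assoc]
  exact Equiv.sum_comp (Equiv.mulRight g) fun h => (f (h * γ) - f (h * γ')) ^ 2

lemma norm_sub_rightTranslate_prod_le (f : G → ℝ) {l : List G} {δ : ℝ}
    (hl : ∀ x ∈ l, ‖rightTranslate f 1 - rightTranslate f x‖ ≤ δ) :
    ‖rightTranslate f 1 - rightTranslate f l.prod‖ ≤ l.length * δ := by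
  induction l with
  | nil => simp
  | cons x t ih =>
    have htail : ‖rightTranslate f x - rightTranslate f (x * t.prod)‖ ≤ t.length * δ := by
      rw [← norm_rightTranslate_mul_sub f x⁻¹]
      simpa using ih fun y hy => hl y (List.mem_cons_of_mem x hy)
    calc ‖rightTranslate f 1 - rightTranslate f (x :: t).prod‖
        ≤ ‖rightTranslate f 1 - rightTranslate f x‖
          + ‖rightTranslate f x - rightTranslate f (x * t.prod)‖ :=
          norm_sub_le_norm_sub_add_norm_sub _ _ _
      _ ≤ δ + t.length * δ := add_le_add (hl x List.mem_cons_self) htail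
      _ = (x :: t).length * δ := by push_cast [List.length_cons]; ring

lemma sum_sq_sub_mul_le_of_mem_wordBall {S : Set G} {f : G → ℝ} {δ : ℝ} (hδ : 0 ≤ δ)
    (hf : ∀ s ∈ S, ∑ h, (f h - f (h * s)) ^ 2 ≤ δ ^ 2) {D : ℕ} {g : G}
    (hg : g ∈ wordBall S D) :
    ∑ h, (f h - f (h * g)) ^ 2 ≤ (D * δ) ^ 2 := by
  obtain ⟨l, hlen, hlS, rfl⟩ := hg
  have hgen : ∀ s ∈ S, ‖rightTranslate f 1 - rightTranslate f s‖ ≤ δ := fun s hs =>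
    (pow_le_pow_iff_left₀ (norm_nonneg _) hδ two_ne_zero).1 (by
      simpa [norm_rightTranslate_sub_sq] using hf s hs)
  have hletter : ∀ x ∈ l, ‖rightTranslate f 1 - rightTranslate f x‖ ≤ δ := by
    intro x hx
    rcases hlS x hx with hxS | hxS
    · exact hgen x hxS
    · rw [← norm_rightTranslate_mul_sub f x⁻¹, norm_sub_rev]
      simpa using hgen x⁻¹ hxS
  calc ∑ h, (f h - f (h * l.prod)) ^ 2
      = ‖rightTranslate f 1 - rightTranslate f l.prod‖ ^ 2 := by
        simp [norm_rightTranslate_sub_sq]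
    _ ≤ (l.length * δ) ^ 2 :=
        pow_le_pow_left₀ (norm_nonneg _) (norm_sub_rightTranslate_prod_le f hletter) 2
    _ ≤ (D * δ) ^ 2 := by gcongr

end RightTranslation

lemma sqrt_sub_sqrt_sq_le_abs_sub {a b : ℝ} (ha : 0 ≤ a) (hb : 0 ≤ b) :
    (√a - √b) ^ 2 ≤ |a - b| := by
  have hsa := Real.sq_sqrt ha
  have hsb := Real.sq_sqrt hb
  rcases le_total a b with hab | hab
  · have := Real.sqrt_le_sqrt hab
    rw [abs_of_nonpos (by linarith)]
    nlinarith [Real.sqrt_nonneg a]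
  · have := Real.sqrt_le_sqrt hab
    rw [abs_of_nonneg (by linarith)]
    nlinarith [Real.sqrt_nonneg b]

lemma sum_abs_sq_sub_sq_sq_le {ι : Type*} (s : Finset ι) (u v : ι → ℝ) :
    (∑ i ∈ s, |u i ^ 2 - v i ^ 2|) ^ 2
      ≤ (∑ i ∈ s, (u i - v i) ^ 2) * (2 * ∑ i ∈ s, (u i ^ 2 + v i ^ 2)) := by
  calc (∑ i ∈ s, |u i ^ 2 - v i ^ 2|) ^ 2
      = (∑ i ∈ s, |u i - v i| * |u i + v i|) ^ 2 := by
        simp only [← abs_mul, sq_sub_sq, mul_comm (u _ - v _)]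
    _ ≤ (∑ i ∈ s, |u i - v i| ^ 2) * ∑ i ∈ s, |u i + v i| ^ 2 := sum_mul_sq_le_sq_mul_sq _ _ _
    _ ≤ (∑ i ∈ s, (u i - v i) ^ 2) * (2 * ∑ i ∈ s, (u i ^ 2 + v i ^ 2)) := by
        simp only [sq_abs, mul_sum]
        gcongr with i
        nlinarith [sq_nonneg (u i - v i)]

lemma sum_abs_sq_sub_sq_le {ι : Type*} [Fintype ι] {u v : ι → ℝ} {η : ℝ} (hη : 0 ≤ η)
    (hu : ∑ i, u i ^ 2 = 1) (hv : ∑ i, v i ^ 2 = 1) (huv : ∑ i, (u i - v i) ^ 2 ≤ η ^ 2) :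
    ∑ i, |u i ^ 2 - v i ^ 2| ≤ 2 * η := by
  have h := sum_abs_sq_sub_sq_sq_le univ u v
  rw [sum_add_distrib, hu, hv] at h
  have hnonneg : 0 ≤ ∑ i, |u i ^ 2 - v i ^ 2| := sum_nonneg fun i _ => abs_nonneg _
  nlinarith

section Averaging

variable {Γ : Type*} [Group Γ] [Fintype Γ]

noncomputable def averagedDensity (k : Γ → Γ → ℝ) (γ : Γ) : ℝ :=
  (Fintype.card Γ : ℝ)⁻¹ * ∑ h, k h (h * γ⁻¹) ^ 2

noncomputable def averagedProfile (k : Γ → Γ → ℝ) (γ : Γ) : ℝ :=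
  √(averagedDensity k γ)

lemma averagedDensity_nonneg (k : Γ → Γ → ℝ) (γ : Γ) : 0 ≤ averagedDensity k γ := by
  unfold averagedDensity
  positivity

lemma sum_comp_mul_inv (φ : Γ → ℝ) (h : Γ) : ∑ γ, φ (h * γ⁻¹) = ∑ w, φ w :=
  Equiv.sum_comp ((Equiv.inv Γ).trans (Equiv.mulLeft h)) φ

lemma averagedDensity_mul (k : Γ → Γ → ℝ) (γ s : Γ) :
    averagedDensity k (γ * s) = (Fintype.card Γ : ℝ)⁻¹ * ∑ h, k (h * s) (h * γ⁻¹) ^ 2 := by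
  rw [averagedDensity, ← Equiv.sum_comp (Equiv.mulRight s) fun h => k h (h * (γ * s)⁻¹) ^ 2]
  simp [mul_assoc]

lemma sum_averagedDensity {k : Γ → Γ → ℝ} (hk : ∀ h, ∑ w, k h w ^ 2 = 1) :
    ∑ γ, averagedDensity k γ = 1 := by
  simp only [averagedDensity, ← mul_sum]
  rw [sum_comm, sum_congr rfl fun h _ => (sum_comp_mul_inv (fun w => k h w ^ 2) h).trans (hk h)]
  simp

lemma sum_abs_averagedDensity_sub_le {k : Γ → Γ → ℝ} {η : ℝ} {s : Γ} (hη : 0 ≤ η)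
    (hk : ∀ h, ∑ w, k h w ^ 2 = 1) (hks : ∀ h, ∑ w, (k h w - k (h * s) w) ^ 2 ≤ η ^ 2) :
    ∑ γ, |averagedDensity k γ - averagedDensity k (γ * s)| ≤ 2 * η := by
  have hcard : (0 : ℝ) < Fintype.card Γ := by exact_mod_cast Fintype.card_pos
  calc ∑ γ, |averagedDensity k γ - averagedDensity k (γ * s)|
      = ∑ γ, (Fintype.card Γ : ℝ)⁻¹ * |∑ h, (k h (h * γ⁻¹) ^ 2 - k (h * s) (h * γ⁻¹) ^ 2)| := by
        simp only [averagedDensity_mul]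
        simp only [averagedDensity, ← mul_sub, ← sum_sub_distrib, abs_mul,
          abs_inv, Nat.abs_cast]
    _ ≤ ∑ γ, (Fintype.card Γ : ℝ)⁻¹ * ∑ h, |k h (h * γ⁻¹) ^ 2 - k (h * s) (h * γ⁻¹) ^ 2| := by
        gcongr
        exact abs_sum_le_sum_abs _ _
    _ = (Fintype.card Γ : ℝ)⁻¹ * ∑ h, ∑ w, |k h w ^ 2 - k (h * s) w ^ 2| := by
        rw [← mul_sum, sum_comm]
        exact congrArg _ (sum_congr rfl fun h _ =>
          sum_comp_mul_inv (fun w => |k h w ^ 2 - k (h * s) w ^ 2|) h)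
    _ ≤ (Fintype.card Γ : ℝ)⁻¹ * ∑ _h : Γ, 2 * η := by
        gcongr with h
        exact sum_abs_sq_sub_sq_le hη (hk h) (hk (h * s)) (hks h)
    _ = 2 * η := by
        rw [sum_const, card_univ, nsmul_eq_mul, ← mul_assoc, inv_mul_cancel₀ hcard.ne', one_mul]

lemma sum_averagedProfile_sq {k : Γ → Γ → ℝ} (hk : ∀ h, ∑ w, k h w ^ 2 = 1) :
    ∑ γ, averagedProfile k γ ^ 2 = 1 := by
  simp only [averagedProfile, Real.sq_sqrt (averagedDensity_nonneg k _), sum_averagedDensity hk]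

lemma sum_sq_averagedProfile_sub_le {k : Γ → Γ → ℝ} {η : ℝ} {s : Γ} (hη : 0 ≤ η)
    (hk : ∀ h, ∑ w, k h w ^ 2 = 1) (hks : ∀ h, ∑ w, (k h w - k (h * s) w) ^ 2 ≤ η ^ 2) :
    ∑ γ, (averagedProfile k γ - averagedProfile k (γ * s)) ^ 2 ≤ 2 * η :=
  (sum_le_sum fun γ _ => sqrt_sub_sqrt_sq_le_abs_sub (averagedDensity_nonneg k γ)
    (averagedDensity_nonneg k (γ * s))).trans (sum_abs_averagedDensity_sub_le hη hk hks)

lemma exists_ne_zero_of_averagedProfile_ne_zero {k : Γ → Γ → ℝ} {γ : Γ}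
    (h : averagedProfile k γ ≠ 0) : ∃ h, k h (h * γ⁻¹) ≠ 0 := by
  by_contra! hk
  simp [averagedProfile, averagedDensity, hk] at h

end Averaging

def IsReiterFunction {Γ : Type*} [Group Γ] (S : Set Γ) (ε : ℝ) (D : ℕ) (f : Γ → ℝ) : Prop :=
  (∀ γ, 0 ≤ f γ) ∧ (∑' γ, f γ ^ 2 = 1) ∧ (∀ s ∈ S, ∑' γ, (f γ - f (γ * s)) ^ 2 ≤ ε ^ 2) ∧
    support f ⊆ wordBall S D

def UniformlyAmenable {ι : Type*} {G : ι → Type*} [∀ i, Group (G i)] (S : ∀ i, Set (G i)) :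
    Prop :=
  ∀ ε : ℝ, 0 < ε → ∃ D : ℕ, ∃ f : ∀ i, G i → ℝ, ∀ i, IsReiterFunction (S i) ε D (f i)

def HasPropertyA {X : Type*} (d : X → X → ℝ) : Prop :=
  ∀ ε : ℝ, 0 < ε → ∀ R : ℝ, 0 < R → ∃ Sb : ℝ, 0 < Sb ∧
    ∃ ξ : X → X → ℝ,
      (∀ x z, 0 ≤ ξ x z) ∧ (∀ x, ∑' z, ξ x z ^ 2 = 1) ∧
      (∀ x y, d x y ≤ R → ∑' z, (ξ x z - ξ y z) ^ 2 ≤ ε ^ 2) ∧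
      (∀ x z, ξ x z ≠ 0 → d x z ≤ Sb)

structure IsCoarseDisjointUnion {G : ℕ → Type*} [∀ n, Group (G n)] [∀ n, Fintype (G n)]
    (S : ∀ n, Set (G n)) (d : (Σ n, G n) → (Σ n, G n) → ℝ) : Prop where
  dist_eq_wordDist : ∀ n (x y : G n), d ⟨n, x⟩ ⟨n, y⟩ = wordDist (S n) x y
  le_dist : ∀ n m, n ≠ m → ∀ (x : G n) (y : G m),
    (n : ℝ) + m + wordDiam (G n) (S n) + wordDiam (G m) (S m) ≤ d ⟨n, x⟩ ⟨m, y⟩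

section Reiter

variable {Γ : Type*} [Group Γ] {S : Set Γ} {ε : ℝ} {D : ℕ} {f : Γ → ℝ}

lemma IsReiterFunction.mono {D' : ℕ} (hf : IsReiterFunction S ε D f) (h : D ≤ D') :
    IsReiterFunction S ε D' f :=
  ⟨hf.1, hf.2.1, hf.2.2.1, hf.2.2.2.trans (wordBall_mono h)⟩

variable [Fintype Γ]

lemma isReiterFunction_const (hS : Subgroup.closure S = ⊤) (ε : ℝ) :
    IsReiterFunction S ε (wordDiam Γ S) fun _ => (√(Fintype.card Γ))⁻¹ := by
  refine ⟨fun _ => by positivity, ?_, fun s _ => by simp [sq_nonneg], fun g _ =>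
    mem_wordBall_wordDiam hS g⟩
  rw [tsum_fintype, sum_const, card_univ, nsmul_eq_mul, inv_pow,
    Real.sq_sqrt (Nat.cast_nonneg _), mul_inv_cancel₀ (by exact_mod_cast Fintype.card_ne_zero)]

lemma isReiterFunction_averagedProfile (hS : Subgroup.closure S = ⊤) {k : Γ → Γ → ℝ}
    {η : ℝ} (hη : 0 ≤ η) (hηε : 2 * η ≤ ε ^ 2) (hk : ∀ h, ∑ w, k h w ^ 2 = 1)
    (hkS : ∀ s ∈ S, ∀ h, ∑ w, (k h w - k (h * s) w) ^ 2 ≤ η ^ 2)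
    (hkD : ∀ h w, k h w ≠ 0 → wordDist S h w ≤ D) :
    IsReiterFunction S ε D (averagedProfile k) := by
  refine ⟨fun γ => Real.sqrt_nonneg _, by rw [tsum_fintype, sum_averagedProfile_sq hk],
    fun s hs => ?_, fun γ hγ => ?_⟩
  · rw [tsum_fintype]
    exact (sum_sq_averagedProfile_sub_le hη hk (hkS s hs)).trans hηε
  · obtain ⟨h, hh⟩ := exists_ne_zero_of_averagedProfile_ne_zero hγ
    have hγ' := mem_wordBall_of_wordDist_le hS (hkD _ _ hh)
    simpa using inv_mem_wordBall hγ'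

end Reiter

lemma tsum_sigma_eq_tsum_fiber {ι α : Type*} {G : ι → Type*} [AddCommMonoid α]
    [TopologicalSpace α] {φ : (Σ i, G i) → α} {i : ι} (h : ∀ z, z.1 ≠ i → φ z = 0) :
    ∑' z, φ z = ∑' b, φ ⟨i, b⟩ := by
  refine (sigma_mk_injective.tsum_eq fun z hz => ?_).symm
  obtain ⟨j, b⟩ := z
  obtain rfl : j = i := not_not.1 (mt (h ⟨j, b⟩) hz)
  exact ⟨b, rfl⟩

lemma extend_sigmaMk_of_fst_ne {ι α : Type*} {G : ι → Type*} [Zero α] {i : ι} (g : G i → α)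
    {z : Σ i, G i} (hz : z.1 ≠ i) : extend (Sigma.mk i) g 0 z = 0 :=
  extend_apply' _ _ _ fun ⟨_, hb⟩ => hz (congrArg Sigma.fst hb).symm

lemma bddAbove_image_setOf_fst_le {G : ℕ → Type*} [∀ n, Fintype (G n)] (φ : (Σ n, G n) → ℝ)
    (N : ℕ) : BddAbove (φ '' {x | x.1 ≤ N}) := by
  have hfin : {x : Σ n, G n | x.1 ≤ N}.Finite :=
    ((Iic N).sigma fun _ => univ).finite_toSet.subset fun x hx => by simpa using hx
  exact (hfin.image φ).bddAbove

namespace IsCoarseDisjointUnion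

variable {G : ℕ → Type*} [∀ n, Group (G n)] [∀ n, Fintype (G n)] {S : ∀ n, Set (G n)}
  {d : (Σ n, G n) → (Σ n, G n) → ℝ}

lemma fst_eq_of_dist_lt (hX : IsCoarseDisjointUnion S d) {x y : Σ n, G n}
    (h : d x y < x.1 + y.1) : x.1 = y.1 := by
  by_contra hne
  have := hX.le_dist _ _ hne x.2 y.2
  have := (wordDiam (G x.1) (S x.1)).cast_nonneg (α := ℝ)
  have := (wordDiam (G y.1) (S y.1)).cast_nonneg (α := ℝ)
  linarith

end IsCoarseDisjointUnion

section LiftedProfile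

variable {G : ℕ → Type*} [∀ n, Group (G n)]

open Classical in
/-- At scale `R ≤ N` the separation of the blocks says nothing about the first `N + 1` of them,
so these are collapsed onto one point. -/
noncomputable def liftedProfile (f : ∀ n, G n → ℝ) (N : ℕ) (x : Σ n, G n) :
    (Σ n, G n) → ℝ :=
  if x.1 ≤ N then Pi.single ⟨0, 1⟩ 1 else extend (Sigma.mk x.1) (fun c => f x.1 (c⁻¹ * x.2)) 0

variable {f : ∀ n, G n → ℝ} {N : ℕ}

lemma liftedProfile_eq_zero_of_fst_ne {x z : Σ n, G n} (hx : ¬x.1 ≤ N) (hz : z.1 ≠ x.1) :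
    liftedProfile f N x z = 0 := by
  simp [liftedProfile, hx, extend_sigmaMk_of_fst_ne _ hz]

lemma liftedProfile_mk_mk {n : ℕ} (hn : ¬n ≤ N) (a c : G n) :
    liftedProfile f N ⟨n, a⟩ ⟨n, c⟩ = f n (c⁻¹ * a) := by
  simp [liftedProfile, hn, sigma_mk_injective.extend_apply]

lemma liftedProfile_nonneg (hf : ∀ n γ, 0 ≤ f n γ) (x z : Σ n, G n) :
    0 ≤ liftedProfile f N x z := by
  classical
  by_cases hx : x.1 ≤ N
  · by_cases hz : z = ⟨0, 1⟩ <;> simp [liftedProfile, hx, hz]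
  obtain ⟨n, a⟩ := x
  obtain ⟨m, c⟩ := z
  rcases eq_or_ne m n with rfl | hm
  · rw [liftedProfile_mk_mk hx]
    exact hf _ _
  · rw [liftedProfile_eq_zero_of_fst_ne hx hm]

lemma tsum_liftedProfile_sq (hf : ∀ n, ∑' γ, f n γ ^ 2 = 1) (x : Σ n, G n) :
    ∑' z, liftedProfile f N x z ^ 2 = 1 := by
  classical
  by_cases hx : x.1 ≤ N
  · simp [liftedProfile, hx, Pi.single_apply]
  obtain ⟨n, a⟩ := x
  rw [tsum_sigma_eq_tsum_fiber (i := n) fun z hz => by simp [liftedProfile_eq_zero_of_fst_ne hx hz],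
    ← hf n]
  simp only [liftedProfile_mk_mk hx]
  exact ((Equiv.inv _).trans (Equiv.mulRight a)).tsum_eq fun γ => f n γ ^ 2

variable [∀ n, Fintype (G n)] {S : ∀ n, Set (G n)} {d : (Σ n, G n) → (Σ n, G n) → ℝ}

lemma IsCoarseDisjointUnion.tsum_sq_liftedProfile_sub_le (hX : IsCoarseDisjointUnion S d)
    (hS : ∀ n, Subgroup.closure (S n) = ⊤) {δ : ℝ} (hδ : 0 ≤ δ)
    (hf : ∀ n, ∀ s ∈ S n, ∑' γ, (f n γ - f n (γ * s)) ^ 2 ≤ δ ^ 2) {x y : Σ n, G n}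
    (hxy : d x y ≤ N) :
    ∑' z, (liftedProfile f N x z - liftedProfile f N y z) ^ 2 ≤ (N * δ) ^ 2 := by
  by_cases hlow : x.1 ≤ N ∧ y.1 ≤ N
  · simp [liftedProfile, hlow.1, hlow.2, sq_nonneg]
  have hfst : x.1 = y.1 := by
    have hfar : N < x.1 + y.1 := by omega
    exact hX.fst_eq_of_dist_lt (hxy.trans_lt (by exact_mod_cast hfar))
  obtain ⟨n, a⟩ := x
  obtain ⟨m, b⟩ := y
  obtain rfl : n = m := hfst
  have hn : ¬n ≤ N := fun hn => hlow ⟨hn, hn⟩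
  rw [tsum_sigma_eq_tsum_fiber (i := n) fun z hz => by
    simp [liftedProfile_eq_zero_of_fst_ne (x := ⟨n, a⟩) hn hz,
      liftedProfile_eq_zero_of_fst_ne (x := ⟨n, b⟩) hn hz]]
  simp only [liftedProfile_mk_mk hn]
  have hab : a⁻¹ * b ∈ wordBall (S n) N :=
    mem_wordBall_of_wordDist_le (hS n) (by exact_mod_cast (hX.dist_eq_wordDist n a b) ▸ hxy)
  rw [← ((Equiv.inv _).trans (Equiv.mulLeft a)).tsum_eq, tsum_fintype]
  simpa [mul_assoc] using sum_sq_sub_mul_le_of_mem_wordBall hδ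
    (fun s hs => by simpa [tsum_fintype] using hf n s hs) hab

lemma IsCoarseDisjointUnion.dist_le_of_liftedProfile_ne_zero (hX : IsCoarseDisjointUnion S d)
    {D : ℕ} (hf : ∀ n, support (f n) ⊆ wordBall (S n) D) {C : ℝ}
    (hC : ∀ x : Σ n, G n, x.1 ≤ N → d x ⟨0, 1⟩ ≤ C) {x z : Σ n, G n}
    (h : liftedProfile f N x z ≠ 0) : d x z ≤ max C D := by
  classical
  by_cases hx : x.1 ≤ N
  · obtain rfl : z = ⟨0, 1⟩ := by
      by_contra hz
      simp [liftedProfile, hx, hz] at h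
    exact (hC x hx).trans (le_max_left _ _)
  obtain ⟨n, a⟩ := x
  obtain ⟨m, c⟩ := z
  obtain rfl : m = n := by
    by_contra hm
    exact h (liftedProfile_eq_zero_of_fst_ne hx hm)
  rw [liftedProfile_mk_mk hx] at h
  have hac : a⁻¹ * c ∈ wordBall (S m) D := by simpa using inv_mem_wordBall (hf m h)
  rw [hX.dist_eq_wordDist]
  exact (Nat.cast_le.2 (wordDist_le_of_mem_wordBall hac)).trans (le_max_right _ _)

end LiftedProfile

theorem IsCoarseDisjointUnion.hasPropertyA {G : ℕ → Type*} [∀ n, Group (G n)]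
    [∀ n, Fintype (G n)] {S : ∀ n, Set (G n)} {d : (Σ n, G n) → (Σ n, G n) → ℝ}
    (hX : IsCoarseDisjointUnion S d) (hS : ∀ n, Subgroup.closure (S n) = ⊤)
    (h : UniformlyAmenable S) : HasPropertyA d := by
  intro ε hε R hR
  obtain ⟨N, hRN⟩ := exists_nat_ge R
  have hN : (0 : ℝ) < N + 1 := by positivity
  obtain ⟨D, f, hf⟩ := h (ε / (N + 1)) (by positivity)
  obtain ⟨C, hC⟩ := bddAbove_image_setOf_fst_le (fun x => d x ⟨0, 1⟩) N
  refine ⟨max C D + 1, by have := le_max_right C D; positivity, liftedProfile f N,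
    liftedProfile_nonneg fun n => (hf n).1, tsum_liftedProfile_sq fun n => (hf n).2.1,
    fun x y hxy => ?_, fun x z hxz => ?_⟩
  · calc ∑' z, (liftedProfile f N x z - liftedProfile f N y z) ^ 2
        ≤ (N * (ε / (N + 1))) ^ 2 :=
          hX.tsum_sq_liftedProfile_sub_le hS (by positivity) (fun n => (hf n).2.2.1)
            (hxy.trans hRN)
      _ ≤ ε ^ 2 := by
          gcongr
          rw [mul_div_assoc', div_le_iff₀ hN]
          linarith
  · exact (hX.dist_le_of_liftedProfile_ne_zero (fun n => (hf n).2.2.2)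
      (fun x hx => hC ⟨x, hx, rfl⟩) hxz).trans (le_add_of_nonneg_right zero_le_one)

namespace IsCoarseDisjointUnion

variable {G : ℕ → Type*} [∀ n, Group (G n)] [∀ n, Fintype (G n)] {S : ∀ n, Set (G n)}
  {d : (Σ n, G n) → (Σ n, G n) → ℝ}

/-- Beyond the support radius `M` the blocks are too far apart for `ξ` to leave them, so on a
block `n > M` it restricts to a family of unit vectors of `ℓ²(G n)`. -/
lemma isReiterFunction_averagedProfile_of_lt (hX : IsCoarseDisjointUnion S d)
    (hS : ∀ n, Subgroup.closure (S n) = ⊤) {ξ : (Σ n, G n) → (Σ n, G n) → ℝ} {η ε : ℝ}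
    {M n : ℕ} (hη : 0 ≤ η) (hηε : 2 * η ≤ ε ^ 2) (hξ : ∀ x, ∑' z, ξ x z ^ 2 = 1)
    (hξR : ∀ x y, d x y ≤ 1 → ∑' z, (ξ x z - ξ y z) ^ 2 ≤ η ^ 2)
    (hξM : ∀ x z, ξ x z ≠ 0 → d x z ≤ M) (hn : M < n) :
    IsReiterFunction (S n) ε M (averagedProfile fun h w => ξ ⟨n, h⟩ ⟨n, w⟩) := by
  have hfiber : ∀ h : G n, ∀ z : Σ n, G n, z.1 ≠ n → ξ ⟨n, h⟩ z = 0 := fun h z hz => by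
    by_contra hξz
    have : d ⟨n, h⟩ z < n + z.1 := by
      have := hξM _ _ hξz
      have : (M : ℝ) < n := Nat.cast_lt.2 hn
      linarith [(z.1).cast_nonneg (α := ℝ)]
    exact hz (hX.fst_eq_of_dist_lt this).symm
  refine isReiterFunction_averagedProfile (hS n) hη hηε (fun h => ?_) (fun s hs h => ?_)
    (fun h w hw => ?_)
  · have := hξ ⟨n, h⟩
    rwa [tsum_sigma_eq_tsum_fiber fun z hz => by simp [hfiber h z hz], tsum_fintype] at this
  · have hd : d ⟨n, h⟩ ⟨n, h * s⟩ ≤ 1 := by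
      rw [hX.dist_eq_wordDist]
      exact_mod_cast wordDist_le_of_mem_wordBall (by simpa using mem_wordBall_one hs)
    have := hξR _ _ hd
    rwa [tsum_sigma_eq_tsum_fiber fun z hz => by simp [hfiber h z hz, hfiber (h * s) z hz],
      tsum_fintype] at this
  · have := hξM _ _ hw
    rw [hX.dist_eq_wordDist] at this
    exact_mod_cast this

theorem uniformlyAmenable (hX : IsCoarseDisjointUnion S d)
    (hS : ∀ n, Subgroup.closure (S n) = ⊤) (h : HasPropertyA d) : UniformlyAmenable S := by
  intro ε hε
  obtain ⟨Sb, -, ξ, -, hξ, hξR, hξSb⟩ := h (ε ^ 2 / 2) (by positivity) 1 one_pos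
  obtain ⟨M, hM⟩ := exists_nat_ge Sb
  refine ⟨max M ((range (M + 1)).sup fun n => wordDiam (G n) (S n)), fun n =>
    if M < n then averagedProfile fun h w => ξ ⟨n, h⟩ ⟨n, w⟩
    else fun _ => (√(Fintype.card (G n)))⁻¹, fun n => ?_⟩
  dsimp only
  split_ifs with hn
  · exact (hX.isReiterFunction_averagedProfile_of_lt hS (by positivity) (by linarith) hξ hξR
      (fun x z hxz => (hξSb x z hxz).trans hM) hn).mono (le_max_left _ _)
  · refine (isReiterFunction_const (hS n) ε).mono (le_max_of_le_right ?_)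
    exact le_sup (f := fun n => wordDiam (G n) (S n)) (mem_range.2 (by omega))

end IsCoarseDisjointUnion

theorem stmt_14_general (G : ℕ → Type*) [∀ n, Group (G n)] [∀ n, Fintype (G n)]
    (S : ∀ n, Finset (G n))
    (hgen : ∀ n, Subgroup.closure ((S n : Set (G n))) = ⊤)
    (d : (Σ n, G n) → (Σ n, G n) → ℝ)
    (hd_restrict : ∀ n (x y : G n),
      d ⟨n, x⟩ ⟨n, y⟩ = wordDist ((S n : Set (G n))) x y)
    (hd_sep : ∀ n m, n ≠ m → ∀ (x : G n) (y : G m),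
      ((n : ℝ) + m + wordDiam (G n) ((S n : Set (G n)))
          + wordDiam (G m) ((S m : Set (G m)))) ≤ d ⟨n, x⟩ ⟨m, y⟩) :
    (∀ ε : ℝ, 0 < ε → ∃ D : ℕ, ∃ f : ∀ n, G n → ℝ, ∀ n,
      (∀ γ, 0 ≤ f n γ) ∧ (∑' γ, f n γ ^ 2 = 1) ∧
      (∀ s ∈ S n, ∑' γ, (f n γ - f n (γ * s)) ^ 2 ≤ ε ^ 2) ∧
      Function.support (f n) ⊆ wordBall ((S n : Set (G n))) D)
    ↔
    (∀ ε : ℝ, 0 < ε → ∀ R : ℝ, 0 < R → ∃ Sb : ℝ, 0 < Sb ∧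
      ∃ ξ : (Σ n, G n) → (Σ n, G n) → ℝ,
        (∀ x z, 0 ≤ ξ x z) ∧ (∀ x, ∑' z, ξ x z ^ 2 = 1) ∧
        (∀ x y, d x y ≤ R → ∑' z, (ξ x z - ξ y z) ^ 2 ≤ ε ^ 2) ∧
        (∀ x z, ξ x z ≠ 0 → d x z ≤ Sb)) := by
  have hX : IsCoarseDisjointUnion (fun n => (S n : Set (G n))) d := ⟨hd_restrict, hd_sep⟩
  exact ⟨hX.hasPropertyA hgen, hX.uniformlyAmenable hgen⟩

theorem stmt_14 (G : ℕ → Type*) [∀ n, Group (G n)] [∀ n, Fintype (G n)]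
    (S : ∀ n, Finset (G n))
    (hgen : ∀ n, Subgroup.closure ((S n : Set (G n))) = ⊤)
    (L : ℕ) (hL : ∀ n, (S n).card ≤ L)
    (d : (Σ n, G n) → (Σ n, G n) → ℝ)
    (hd_eq : ∀ x y, d x y = 0 ↔ x = y)
    (hd_symm : ∀ x y, d x y = d y x)
    (hd_tri : ∀ x y z, d x z ≤ d x y + d y z)
    (hd_restrict : ∀ n (x y : G n),
      d ⟨n, x⟩ ⟨n, y⟩ = wordDist ((S n : Set (G n))) x y)
    (hd_sep : ∀ n m, n ≠ m → ∀ (x : G n) (y : G m),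
      ((n : ℝ) + m + wordDiam (G n) ((S n : Set (G n)))
          + wordDiam (G m) ((S m : Set (G m)))) ≤ d ⟨n, x⟩ ⟨m, y⟩) :
    (∀ ε : ℝ, 0 < ε → ∃ D : ℕ, ∃ f : ∀ n, G n → ℝ, ∀ n,
      (∀ γ, 0 ≤ f n γ) ∧ (∑' γ, f n γ ^ 2 = 1) ∧
      (∀ s ∈ S n, ∑' γ, (f n γ - f n (γ * s)) ^ 2 ≤ ε ^ 2) ∧
      Function.support (f n) ⊆ wordBall ((S n : Set (G n))) D)
    ↔
    (∀ ε : ℝ, 0 < ε → ∀ R : ℝ, 0 < R → ∃ Sb : ℝ, 0 < Sb ∧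
      ∃ ξ : (Σ n, G n) → (Σ n, G n) → ℝ,
        (∀ x z, 0 ≤ ξ x z) ∧ (∀ x, ∑' z, ξ x z ^ 2 = 1) ∧
        (∀ x y, d x y ≤ R → ∑' z, (ξ x z - ξ y z) ^ 2 ≤ ε ^ 2) ∧
        (∀ x z, ξ x z ≠ 0 → d x z ≤ Sb)) :=
  stmt_14_general G S hgen d hd_restrict hd_sep
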